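/- For α ∈ (0,1), k ∈ ℕ, and positive integers r ≤ q, the limit defining the shifted Euler constant ζ_k(α,r,q) := lim_{x→∞} (∑_{n ≤ x, n ≡ r mod q} (log n)^k / n^α − I_k(x,α)/q) exists. -/

import Mathlib

open Filter Real Finset

/-- `I_k(x, α) = x^{1-α} ∑_{i=0}^{k} (-1)^i (k!/(k-i)!) (log x)^{k-i} / (1-α)^{i+1}` -/
noncomputable def Ik (k : ℕ) (x α : ℝ) : ℝ :=
  x ^ (1 - α) * ∑ i ∈ Finset.range (k + 1),
    (-1 : ℝ) ^ i * ((Nat.factorial k : ℝ) / (Nat.factorial (k - i) : ℝ)) *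
      Real.log x ^ (k - i) / (1 - α) ^ (i + 1)

/-- `H_k(x, α, r, q) = ∑_{n ≤ x, n ≡ r mod q} (log n)^k / n^α` -/
noncomputable def Hk (k : ℕ) (α : ℝ) (r q : ℕ) (x : ℝ) : ℝ :=
  ∑ n ∈ Finset.Icc 1 ⌊x⌋₊, if n % q = r % q then Real.log n ^ k / (n : ℝ) ^ α else 0

/-! The summand `f t = (log t)^k / t^α` decreases to `0` for `t ≥ exp (k / α)` and `Ik k · α`
is an antiderivative of it. With `g s = f (q s + r)`, the sum runs over `n = q m + r`, i.e. over
`m ≤ y := (x - r) / q`, while `Ik k x α / q = ∫₀^y g + Ik k r α / q`. So it suffices that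
`∑_{m ≤ y} g m - ∫₀^y g` converges for every continuous `g` decreasing to `0`: on integer steps
this difference increases while adding `g` makes it decrease, as in the proof that Euler's
constant exists. -/

section SumSubIntegral

variable {g : ℝ → ℝ}

open Set MeasureTheory in
lemma ContinuousOn.intervalIntegrable_of_Ici {a u v : ℝ}
    (hg : ContinuousOn g (Ici a)) (hu : a ≤ u) (hv : a ≤ v) :
    IntervalIntegrable g volume u v :=
  (hg.mono fun _ ht => le_trans (le_min hu hv) ht.1).intervalIntegrable

lemma AntitoneOn.nonneg_of_tendsto_zero {a : ℝ} (hg : AntitoneOn g (Set.Ici a))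
    (hlim : Tendsto g atTop (nhds 0)) {t : ℝ} (ht : a ≤ t) : 0 ≤ g t :=
  le_of_tendsto hlim <| (eventually_ge_atTop t).mono fun _ hs =>
    hg (Set.mem_Ici.2 ht) (Set.mem_Ici.2 (ht.trans hs)) hs

lemma AntitoneOn.integral_mem_Icc {a : ℝ} (hg : AntitoneOn g (Set.Icc a (a + 1))) :
    ∫ s in a..a + 1, g s ∈ Set.Icc (g (a + 1)) (g a) := by
  have hg' : AntitoneOn g (Set.Icc a (a + (1 : ℕ))) := by simpa using hg
  constructor
  · simpa using hg'.sum_le_integral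
  · simpa using hg'.integral_le_sum

lemma sum_range_succ_sub_integral (hg : ContinuousOn g (Set.Ici 0)) (M : ℕ) :
    ∑ m ∈ range (M + 1), g m - ∫ s in (0 : ℝ)..(M + 1 : ℕ), g s =
      (∑ m ∈ range M, g m - ∫ s in (0 : ℝ)..M, g s) + (g M - ∫ s in (M : ℝ)..M + 1, g s) := by
  rw [sum_range_succ, Nat.cast_succ, ← intervalIntegral.integral_add_adjacent_intervals
    (hg.intervalIntegrable_of_Ici le_rfl M.cast_nonneg)
    (hg.intervalIntegrable_of_Ici M.cast_nonneg (by positivity))]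
  ring

lemma tendsto_sum_range_sub_integral (hg : ContinuousOn g (Set.Ici 0)) {m₀ : ℕ}
    (hanti : AntitoneOn g (Set.Ici m₀)) (hlim : Tendsto g atTop (nhds 0)) :
    ∃ c, Tendsto (fun M : ℕ => ∑ m ∈ range M, g m - ∫ s in (0 : ℝ)..M, g s) atTop (nhds c) := by
  set F := fun M : ℕ => ∑ m ∈ range M, g m - ∫ s in (0 : ℝ)..M, g s
  have hstep : ∀ M, m₀ ≤ M → F M ≤ F (M + 1) ∧ F (M + 1) + g (M + 1) ≤ F M + g M := by
    intro M hM
    have hM' : (m₀ : ℝ) ≤ M := by exact_mod_cast hM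
    obtain ⟨hlo, hhi⟩ := (hanti.mono fun t ht => hM'.trans ht.1 :
      AntitoneOn g (Set.Icc (M : ℝ) (M + 1))).integral_mem_Icc
    simp only [F, sum_range_succ_sub_integral hg]
    constructor <;> linarith
  have hmono : Monotone fun n => F (n + m₀) :=
    monotone_nat_of_le_succ fun n => by
      simpa [add_right_comm n 1 m₀] using (hstep (n + m₀) (by omega)).1
  have hanti' : Antitone fun n => F (n + m₀) + g ↑(n + m₀) :=
    antitone_nat_of_succ_le fun n => by
      simpa [add_right_comm n 1 m₀] using (hstep (n + m₀) (by omega)).2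
  have hbound : ∀ n, F (n + m₀) ≤ F m₀ + g m₀ := fun n => by
    have hg0 : 0 ≤ g ↑(n + m₀) :=
      hanti.nonneg_of_tendsto_zero hlim (by exact_mod_cast Nat.le_add_left m₀ n)
    simpa using (le_add_of_nonneg_right hg0).trans (hanti' (Nat.zero_le n))
  obtain ⟨c, hc⟩ : ∃ c, Tendsto (fun n => F (n + m₀)) atTop (nhds c) :=
    ⟨_, tendsto_atTop_ciSup hmono ⟨_, Set.forall_mem_range.2 hbound⟩⟩
  exact ⟨c, (tendsto_add_atTop_iff_nat m₀).1 hc⟩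

lemma tendsto_sum_range_floor_sub_integral (hg : ContinuousOn g (Set.Ici 0)) {a : ℝ}
    (hanti : AntitoneOn g (Set.Ici a)) (hlim : Tendsto g atTop (nhds 0)) :
    ∃ c, Tendsto (fun y : ℝ => ∑ m ∈ range (⌊y⌋₊ + 1), g m - ∫ s in (0 : ℝ)..y, g s)
      atTop (nhds c) := by
  obtain ⟨c, hc⟩ := tendsto_sum_range_sub_integral hg
    (hanti.mono fun _ ht => (Nat.le_ceil a).trans ht) hlim
  have hgap : ∀ᶠ y in atTop, ‖∫ s in y..(⌊y⌋₊ + 1 : ℕ), g s‖ ≤ g y := by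
    filter_upwards [eventually_ge_atTop a, eventually_ge_atTop 0] with y hya hy0
    have hlt : y < (⌊y⌋₊ + 1 : ℕ) := by exact_mod_cast Nat.lt_floor_add_one y
    have hlen : |((⌊y⌋₊ + 1 : ℕ) : ℝ) - y| ≤ 1 := by
      rw [abs_of_pos (sub_pos.2 hlt)]
      push_cast
      linarith [Nat.floor_le hy0]
    have hgy : 0 ≤ g y := hanti.nonneg_of_tendsto_zero hlim hya
    refine (intervalIntegral.norm_integral_le_of_norm_le_const fun t ht => ?_).trans
      (mul_le_of_le_one_right hgy hlen)
    rw [Set.uIoc_of_le hlt.le] at ht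
    have hyt : a ≤ t := hya.trans ht.1.le
    rw [Real.norm_of_nonneg (hanti.nonneg_of_tendsto_zero hlim hyt)]
    exact hanti hya hyt ht.1.le
  have herr : Tendsto (fun y : ℝ => ∫ s in y..(⌊y⌋₊ + 1 : ℕ), g s) atTop (nhds 0) :=
    squeeze_zero_norm' hgap hlim
  have hfloor : Tendsto (fun y : ℝ => ⌊y⌋₊ + 1) atTop atTop :=
    (tendsto_add_atTop_nat 1).comp tendsto_nat_floor_atTop
  refine ⟨c + 0, ((hc.comp hfloor).add herr).congr' ?_⟩
  filter_upwards [eventually_ge_atTop 0] with y hy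
  simp only [Function.comp_apply]
  rw [← intervalIntegral.integral_add_adjacent_intervals (b := y)
    (hg.intervalIntegrable_of_Ici le_rfl hy) (hg.intervalIntegrable_of_Ici hy (by positivity))]
  ring

end SumSubIntegral

noncomputable def logPowDivRpow (k : ℕ) (α t : ℝ) : ℝ := log t ^ k / t ^ α

lemma continuousOn_logPowDivRpow (k : ℕ) (α : ℝ) :
    ContinuousOn (logPowDivRpow k α) (Set.Ioi 0) := by
  refine ((continuousOn_log.mono fun t ht => ht.ne').pow k).div
    (continuousOn_id.rpow_const fun t ht => Or.inl ht.ne') fun t ht => (rpow_pos_of_pos ht α).ne'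

lemma tendsto_logPowDivRpow_atTop (k : ℕ) {α : ℝ} (hα : 0 < α) :
    Tendsto (logPowDivRpow k α) atTop (nhds 0) := by
  show Tendsto (fun t => log t ^ k / t ^ α) _ _
  simpa using (isLittleO_log_rpow_rpow_atTop (k : ℝ) hα).tendsto_div_nhds_zero

lemma hasDerivAt_logPowDivRpow (k : ℕ) (α : ℝ) {t : ℝ} (ht : 0 < t) :
    HasDerivAt (logPowDivRpow k α) ((k * log t ^ (k - 1) - α * log t ^ k) * t ^ (-α - 1)) t := by
  have hpow : t ^ (-α - 1) = t ^ (-α) * t⁻¹ := by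
    rw [rpow_sub_one ht.ne', div_eq_mul_inv]
  have heq : (fun y => log y ^ k * y ^ (-α)) =ᶠ[nhds t] logPowDivRpow k α := by
    filter_upwards [eventually_gt_nhds ht] with y hy
    rw [logPowDivRpow, rpow_neg hy.le, div_eq_mul_inv]
  refine (((hasDerivAt_log ht.ne').pow k).mul (hasDerivAt_rpow_const (p := -α)
    (Or.inl ht.ne'))).congr_of_eventuallyEq heq.symm |>.congr_deriv ?_
  simp only [hpow, Pi.pow_apply]
  ring

lemma antitoneOn_logPowDivRpow (k : ℕ) {α : ℝ} (hα : 0 < α) :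
    AntitoneOn (logPowDivRpow k α) (Set.Ici (exp (k / α))) := by
  have hpos : ∀ t ∈ Set.Ici (exp (k / α)), 0 < t := fun t ht => (exp_pos _).trans_le ht
  apply antitoneOn_of_deriv_nonpos (convex_Ici _)
    ((continuousOn_logPowDivRpow k α).mono hpos)
  · intro t ht
    rw [interior_Ici] at ht
    exact (hasDerivAt_logPowDivRpow k α
      (hpos t (Set.Ioi_subset_Ici_self ht))).differentiableAt.differentiableWithinAt
  · intro t ht
    rw [interior_Ici] at ht
    have ht0 := hpos t (Set.Ioi_subset_Ici_self ht)
    rw [(hasDerivAt_logPowDivRpow k α ht0).deriv]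
    refine mul_nonpos_of_nonpos_of_nonneg ?_ (rpow_nonneg ht0.le _)
    have hlog : k / α ≤ log t := (le_log_iff_exp_le ht0).2 ht.le
    have hlog' : (k : ℝ) ≤ α * log t := by rwa [div_le_iff₀' hα] at hlog
    cases k with
    | zero => simpa using hα.le
    | succ k =>
      have hL : 0 ≤ log t ^ k := pow_nonneg ((div_nonneg k.succ.cast_nonneg hα.le).trans hlog) k
      rw [Nat.add_sub_cancel, pow_succ]
      nlinarith [mul_le_mul_of_nonneg_left hlog' hL]

lemma Ik_zero (x α : ℝ) : Ik 0 x α = x ^ (1 - α) / (1 - α) := by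
  simp [Ik, div_eq_mul_inv]

lemma Ik_succ (k : ℕ) (x : ℝ) {α : ℝ} (hα : α ≠ 1) :
    Ik (k + 1) x α = (x ^ (1 - α) * log x ^ (k + 1) - (k + 1) * Ik k x α) / (1 - α) := by
  have h1α : 1 - α ≠ 0 := sub_ne_zero.2 hα.symm
  have hterm : ∀ i ∈ range (k + 1),
      (-1 : ℝ) ^ (i + 1) * ((k + 1).factorial / (k + 1 - (i + 1)).factorial : ℝ) *
          log x ^ (k + 1 - (i + 1)) / (1 - α) ^ (i + 1 + 1) =
        -((k + 1) / (1 - α)) * ((-1 : ℝ) ^ i * (k.factorial / (k - i).factorial : ℝ) *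
          log x ^ (k - i) / (1 - α) ^ (i + 1)) := by
    intro i _
    rw [Nat.add_sub_add_right, Nat.factorial_succ]
    push_cast
    field_simp
    ring
  rw [Ik, sum_range_succ', sum_congr rfl hterm, ← mul_sum, Ik]
  generalize ∑ i ∈ range (k + 1), ((-1 : ℝ) ^ i * (k.factorial / (k - i).factorial : ℝ) *
    log x ^ (k - i) / (1 - α) ^ (i + 1)) = S
  have hfac : ((k + 1).factorial : ℝ) ≠ 0 := by positivity
  simp only [Nat.sub_zero, pow_zero, one_mul, zero_add, pow_one, div_self hfac]
  field_simp
  ring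

lemma hasDerivAt_Ik (k : ℕ) {α x : ℝ} (hα : α ≠ 1) (hx : 0 < x) :
    HasDerivAt (fun y => Ik k y α) (logPowDivRpow k α x) x := by
  have h1α : 1 - α ≠ 0 := sub_ne_zero.2 hα.symm
  have hrpow : HasDerivAt (fun y : ℝ => y ^ (1 - α)) ((1 - α) * x ^ (-α)) x := by
    simpa using hasDerivAt_rpow_const (p := 1 - α) (Or.inl hx.ne')
  have hxα : x ^ (1 - α) = x * x ^ (-α) := by
    rw [sub_eq_add_neg, rpow_add hx, rpow_one]
  have hf : ∀ j, logPowDivRpow j α x = log x ^ j * x ^ (-α) := fun j => by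
    rw [logPowDivRpow, rpow_neg hx.le, div_eq_mul_inv]
  induction k with
  | zero =>
    simp only [Ik_zero]
    refine (hrpow.div_const _).congr_deriv ?_
    rw [hf]
    field_simp
  | succ k ih =>
    simp only [Ik_succ k _ hα]
    refine (((hrpow.mul ((hasDerivAt_log hx.ne').pow (k + 1))).sub
      (ih.const_mul _)).div_const _).congr_deriv ?_
    rw [hf, hf, hxα, Pi.pow_apply, Nat.add_sub_cancel]
    field_simp
    push_cast
    ring

lemma integral_logPowDivRpow (k : ℕ) {α a b : ℝ} (hα : α ≠ 1) (ha : 0 < a) (hb : 0 < b) :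
    ∫ t in a..b, logPowDivRpow k α t = Ik k b α - Ik k a α := by
  have hsub : Set.uIcc a b ⊆ Set.Ioi 0 := fun t ht => lt_min ha hb |>.trans_le ht.1
  exact intervalIntegral.integral_eq_sub_of_hasDerivAt (fun t ht => hasDerivAt_Ik k hα (hsub ht))
    ((continuousOn_logPowDivRpow k α).mono hsub).intervalIntegrable

lemma le_of_mod_eq_mod {n q r : ℕ} (hn : 0 < n) (hrq : r ≤ q) (hmod : n % q = r % q) : r ≤ n := by
  rcases hrq.lt_or_eq with hlt | rfl
  · rw [Nat.mod_eq_of_lt hlt] at hmod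
    exact hmod ▸ Nat.mod_le n q
  · exact Nat.le_of_dvd hn (Nat.dvd_of_mod_eq_zero (by simpa using hmod))

lemma filter_Icc_mod_eq_image {q r N : ℕ} (hr : 0 < r) (hrq : r ≤ q) (hrN : r ≤ N) :
    {n ∈ Icc 1 N | n % q = r % q} = (range ((N - r) / q + 1)).image (fun m => q * m + r) := by
  ext n
  simp only [mem_filter, mem_Icc, mem_image, mem_range, Nat.lt_succ_iff]
  constructor
  · rintro ⟨⟨hn, hnN⟩, hmod⟩
    have hrn := le_of_mod_eq_mod hn hrq hmod
    obtain ⟨m, hm⟩ := (Nat.modEq_iff_dvd' hrn).1 hmod.symm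
    refine ⟨m, (Nat.le_div_iff_mul_le (hr.trans_le hrq)).2 ?_, by omega⟩
    rw [mul_comm]
    omega
  · rintro ⟨m, hm, rfl⟩
    refine ⟨⟨by omega, ?_⟩, Nat.mul_add_mod ..⟩
    have := (Nat.le_div_iff_mul_le (hr.trans_le hrq)).1 hm
    rw [mul_comm] at this
    omega

lemma Hk_eq_sum_range (k : ℕ) (α : ℝ) {r q : ℕ} (hr : 0 < r) (hrq : r ≤ q) {x : ℝ} (hx : r ≤ x) :
    Hk k α r q x = ∑ m ∈ range (⌊(x - r) / q⌋₊ + 1), logPowDivRpow k α (q * m + r) := by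
  have hq : 0 < q := hr.trans_le hrq
  have hinj : Set.InjOn (fun m => q * m + r) (range ((⌊x⌋₊ - r) / q + 1)) :=
    fun a _ b _ h => Nat.eq_of_mul_eq_mul_left hq (Nat.add_right_cancel h)
  have hfloor : ⌊x - r⌋₊ = ⌊x⌋₊ - r := by
    have := Nat.floor_add_natCast (sub_nonneg.2 hx) r
    rw [sub_add_cancel] at this
    omega
  rw [Hk, ← sum_filter, filter_Icc_mod_eq_image hr hrq (Nat.le_floor hx), sum_image hinj,
    Nat.floor_div_natCast, hfloor]
  push_cast
  rfl

theorem stmt1 (k : ℕ) (α : ℝ) (hα : α ∈ Set.Ioo (0 : ℝ) 1) (r q : ℕ)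
    (hr : 0 < r) (hrq : r ≤ q) :
    ∃ c : ℝ, Tendsto (fun x : ℝ => Hk k α r q x - Ik k x α / q) atTop (nhds c) := by
  obtain ⟨hα0, hα1⟩ := hα
  have hq : (1 : ℝ) ≤ q := by exact_mod_cast hr.trans_le hrq
  set g : ℝ → ℝ := fun s => logPowDivRpow k α (q * s + r)
  have hg_cont : ContinuousOn g (Set.Ici 0) :=
    (continuousOn_logPowDivRpow k α).comp (by fun_prop) fun s (hs : 0 ≤ s) =>
      Set.mem_Ioi.2 (by positivity)
  have hg_anti : AntitoneOn g (Set.Ici (exp (k / α))) := by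
    intro s (hs : exp (k / α) ≤ s) t _ hst
    have hmem : ∀ u, s ≤ u → exp (k / α) ≤ (q : ℝ) * u + r := fun u hu => by
      nlinarith [exp_pos (k / α)]
    exact antitoneOn_logPowDivRpow k hα0 (hmem s le_rfl) (hmem t hst) (by gcongr)
  have hg_lim : Tendsto g atTop (nhds 0) :=
    (tendsto_logPowDivRpow_atTop k hα0).comp
      (tendsto_atTop_add_const_right _ _ (tendsto_id.const_mul_atTop (by positivity)))
  obtain ⟨c, hc⟩ := tendsto_sum_range_floor_sub_integral hg_cont hg_anti hg_lim
  have hy : Tendsto (fun x : ℝ => (x - r) / q) atTop atTop :=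
    (tendsto_atTop_add_const_right _ _ tendsto_id).atTop_div_const (by positivity)
  refine ⟨c - Ik k r α / q, ((hc.comp hy).sub_const _).congr' ?_⟩
  filter_upwards [eventually_ge_atTop (r : ℝ)] with x hx
  have hint : ∫ s in (0 : ℝ)..(x - r) / q, g s = (Ik k x α - Ik k r α) / q := by
    rw [intervalIntegral.integral_comp_mul_add _ (by positivity) (r : ℝ),
      integral_logPowDivRpow k hα1.ne (by positivity) (by positivity),
      mul_div_cancel₀ _ (by positivity), sub_add_cancel, mul_zero, zero_add, smul_eq_mul,
      inv_mul_eq_div]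
  simp only [Function.comp_apply, Hk_eq_sum_range k α hr hrq hx, hint]
  ring
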